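/- arXiv:1910.02271 — 2 statements merged into one kernel-verified Lean document; each statement's English description precedes it below -/
import Mathlib

section
/- For every α > 0 and every z ∈ Ω^{(α)}, one has Re χ_α(z) < Re χ_α(−z). -/
/-! Write `w = 1 + z` and `S = √(4α² + w²)`. For `Re z > -1`, `Im z > 0` both `w` and `S` lie in the
open first quadrant, and differentiating gives `χ_α' = ½ log (2α / (w + S))`. Since
`(w + S)(w - S) = -4α²` and `|w - S| < |w + S|`, we get `|w + S| > 2α`, so `Re χ_α' < 0` there.
By Cauchy–Riemann `t ↦ Re χ_α(t + iy)` is then strictly decreasing on `t > -1`, whence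
`Re χ_α(z) < Re χ_α(-conj z)`; finally `χ_α(conj ζ) = conj χ_α(ζ)` turns the right-hand side into
`Re χ_α(-z)`. -/

open Complex

/-- The principal branch of the complex square root. -/
noncomputable def csqrt (z : ℂ) : ℂ := z ^ (1 / 2 : ℂ)

/-- `χ_α(z) := (1/2)·√(4α²+(1+z)²) + ((1+z)/2)·log(2α/(1+z+√(4α²+(1+z)²)))`,
with principal branches of square root and logarithm. -/
noncomputable def chi (α : ℝ) (z : ℂ) : ℂ :=
  (1 / 2 : ℂ) * csqrt (4 * (α : ℂ) ^ 2 + (1 + z) ^ 2) +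
    (1 + z) / 2 * Complex.log (2 * (α : ℂ) / (1 + z + csqrt (4 * (α : ℂ) ^ 2 + (1 + z) ^ 2)))

/-- The open rectangle `Ω^{(α)} = (0,1) + 2iα(0,1)`. -/
def Omega (α : ℝ) : Set ℂ :=
  {z : ℂ | 0 < z.re ∧ z.re < 1 ∧ 0 < z.im ∧ z.im < 2 * α}

open Set ComplexConjugate

lemma csqrt_mul_self {u : ℂ} (hu : u ≠ 0) : csqrt u * csqrt u = u := by
  rw [csqrt, ← cpow_add _ _ hu]
  norm_num

lemma csqrt_re_pos_and_im_pos {u : ℂ} (hu : 0 < u.im) :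
    0 < (csqrt u).re ∧ 0 < (csqrt u).im := by
  have hu0 : u ≠ 0 := fun h => by simp [h] at hu
  have harg_pos : 0 < u.arg :=
    (arg_nonneg_iff.2 hu.le).lt_of_ne fun h => hu.ne' (arg_eq_zero_iff.1 h.symm).2
  have harg_lt : u.arg < Real.pi := arg_lt_pi_iff.2 (Or.inr hu.ne')
  have him : (log u * (1 / 2)).im = u.arg / 2 := by simp [log_im, div_eq_mul_inv]
  rw [csqrt, cpow_def_of_ne_zero hu0, exp_re, exp_im, him]
  exact ⟨mul_pos (Real.exp_pos _) (Real.cos_pos_of_mem_Ioo ⟨by linarith, by linarith⟩),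
    mul_pos (Real.exp_pos _) (Real.sin_pos_of_pos_of_lt_pi (by linarith) (by linarith))⟩

lemma hasDerivAt_csqrt {u : ℂ} (hu : u ∈ slitPlane) :
    HasDerivAt csqrt (1 / (2 * csqrt u)) u := by
  have hu0 : u ≠ 0 := slitPlane_ne_zero hu
  have hS0 : csqrt u ≠ 0 := fun h => hu0 (by simpa [h] using (csqrt_mul_self hu0).symm)
  refine (hasStrictDerivAt_cpow_const hu).hasDerivAt.congr_deriv ?_
  rw [cpow_sub _ _ hu0, cpow_one, ← csqrt]
  field_simp
  rw [sq, csqrt_mul_self hu0]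

lemma conj_csqrt {u : ℂ} (hu : u.arg ≠ Real.pi) : csqrt (conj u) = conj (csqrt u) := by
  rw [csqrt, csqrt, conj_cpow _ _ hu, map_div₀, map_one, map_ofNat]

lemma norm_sub_lt_norm_add {w s : ℂ} (h : 0 < (w * conj s).re) : ‖w - s‖ < ‖w + s‖ := by
  have hsq : ‖w - s‖ ^ 2 < ‖w + s‖ ^ 2 := by
    rw [Complex.sq_norm, Complex.sq_norm, normSq_add, normSq_sub]
    linarith
  exact lt_of_pow_lt_pow_left₀ 2 (norm_nonneg _) hsq

noncomputable def chiRoot (α : ℝ) (z : ℂ) : ℂ := csqrt (4 * (α : ℂ) ^ 2 + (1 + z) ^ 2)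

lemma chi_eq (α : ℝ) (z : ℂ) :
    chi α z = 1 / 2 * chiRoot α z + (1 + z) / 2 * log (2 * α / (1 + z + chiRoot α z)) :=
  rfl

lemma radicand_im_pos (α : ℝ) {z : ℂ} (hre : -1 < z.re) (him : 0 < z.im) :
    0 < (4 * (α : ℂ) ^ 2 + (1 + z) ^ 2).im := by
  have h : (4 * (α : ℂ) ^ 2 + (1 + z) ^ 2).im = 2 * (1 + z.re) * z.im := by
    simp only [sq, add_im, mul_im, add_re, ofReal_re, ofReal_im, one_re, one_im, re_ofNat, im_ofNat]
    ring
  rw [h]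
  exact mul_pos (mul_pos two_pos (by linarith)) him

lemma radicand_mem_slitPlane (α : ℝ) {z : ℂ} (hre : -1 < z.re) (him : 0 < z.im) :
    4 * (α : ℂ) ^ 2 + (1 + z) ^ 2 ∈ slitPlane :=
  mem_slitPlane_iff.2 (Or.inr (radicand_im_pos α hre him).ne')

lemma chiRoot_re_pos_and_im_pos (α : ℝ) {z : ℂ} (hre : -1 < z.re) (him : 0 < z.im) :
    0 < (chiRoot α z).re ∧ 0 < (chiRoot α z).im :=
  csqrt_re_pos_and_im_pos (radicand_im_pos α hre him)

lemma chiRoot_ne_zero (α : ℝ) {z : ℂ} (hre : -1 < z.re) (him : 0 < z.im) : chiRoot α z ≠ 0 :=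
  fun h => by simpa [h] using (chiRoot_re_pos_and_im_pos α hre him).1

lemma chiRoot_mul_self (α : ℝ) {z : ℂ} (hre : -1 < z.re) (him : 0 < z.im) :
    chiRoot α z * chiRoot α z = 4 * (α : ℂ) ^ 2 + (1 + z) ^ 2 :=
  csqrt_mul_self (slitPlane_ne_zero (radicand_mem_slitPlane α hre him))

lemma one_add_add_chiRoot_re_pos (α : ℝ) {z : ℂ} (hre : -1 < z.re) (him : 0 < z.im) :
    0 < (1 + z + chiRoot α z).re := by
  simp only [add_re, one_re]
  linarith [(chiRoot_re_pos_and_im_pos α hre him).1]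

lemma two_mul_lt_norm_one_add_add_chiRoot {α : ℝ} (hα : 0 < α) {z : ℂ} (hre : -1 < z.re)
    (him : 0 < z.im) : 2 * α < ‖1 + z + chiRoot α z‖ := by
  obtain ⟨hSre, hSim⟩ := chiRoot_re_pos_and_im_pos α hre him
  have hprod : ‖1 + z + chiRoot α z‖ * ‖1 + z - chiRoot α z‖ = (2 * α) ^ 2 := by
    have h : (1 + z + chiRoot α z) * (1 + z - chiRoot α z) = -(((2 * α) ^ 2 : ℝ) : ℂ) := by
      push_cast
      linear_combination (-1 : ℂ) * chiRoot_mul_self α hre him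
    rw [← norm_mul, h, norm_neg, norm_real, Real.norm_of_nonneg (sq_nonneg _)]
  have hlt : ‖1 + z - chiRoot α z‖ < ‖1 + z + chiRoot α z‖ := by
    refine norm_sub_lt_norm_add ?_
    simp only [mul_re, conj_re, conj_im, add_re, add_im, one_re, one_im]
    nlinarith
  nlinarith [norm_nonneg (1 + z - chiRoot α z)]

lemma two_mul_div_one_add_add_chiRoot_re_pos {α : ℝ} (hα : 0 < α) {z : ℂ} (hre : -1 < z.re)
    (him : 0 < z.im) : 0 < (2 * α / (1 + z + chiRoot α z)).re := by
  have hv := one_add_add_chiRoot_re_pos α hre him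
  rw [div_eq_mul_inv, show (2 * α : ℂ) = ((2 * α : ℝ) : ℂ) by push_cast; ring, re_ofReal_mul,
    inv_re]
  exact mul_pos (by positivity) (div_pos hv (normSq_pos.2 fun h => by simp [h] at hv))

lemma re_log_two_mul_div_neg {α : ℝ} (hα : 0 < α) {z : ℂ} (hre : -1 < z.re) (him : 0 < z.im) :
    (log (2 * α / (1 + z + chiRoot α z))).re < 0 := by
  have hv := two_mul_lt_norm_one_add_add_chiRoot hα hre him
  have hnorm : ‖(2 * α : ℂ)‖ = 2 * α := by simp [abs_of_pos hα]
  rw [log_re, norm_div, hnorm]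
  exact Real.log_neg (div_pos (by linarith) (by linarith)) ((div_lt_one (by linarith)).2 hv)

lemma hasDerivAt_chiRoot (α : ℝ) {z : ℂ} (hre : -1 < z.re) (him : 0 < z.im) :
    HasDerivAt (chiRoot α) ((1 + z) / chiRoot α z) z := by
  have hS0 := chiRoot_ne_zero α hre him
  have hQ : HasDerivAt (fun w : ℂ => 4 * (α : ℂ) ^ 2 + (1 + w) ^ 2) (2 * (1 + z)) z := by
    simpa using (((hasDerivAt_id z).const_add 1).pow 2).const_add (4 * (α : ℂ) ^ 2)
  refine ((hasDerivAt_csqrt (radicand_mem_slitPlane α hre him)).comp z hQ).congr_deriv ?_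
  rw [← chiRoot]
  field_simp

lemma hasDerivAt_chi {α : ℝ} (hα : 0 < α) {z : ℂ} (hre : -1 < z.re) (him : 0 < z.im) :
    HasDerivAt (chi α) (log (2 * α / (1 + z + chiRoot α z)) / 2) z := by
  have hS0 := chiRoot_ne_zero α hre him
  have hv0 : 1 + z + chiRoot α z ≠ 0 := fun h => by
    simpa [h] using one_add_add_chiRoot_re_pos α hre him
  have hα0 : (α : ℂ) ≠ 0 := ofReal_ne_zero.2 hα.ne'
  have hS := hasDerivAt_chiRoot α hre him
  have hv : HasDerivAt (fun w => 1 + w + chiRoot α w) (1 + (1 + z) / chiRoot α z) z :=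
    ((hasDerivAt_id z).const_add 1).add hS
  have hlog := ((hasDerivAt_const z (2 * α : ℂ)).fun_div hv hv0).clog
    (mem_slitPlane_iff.2 (Or.inl (two_mul_div_one_add_add_chiRoot_re_pos hα hre him)))
  have hlin : HasDerivAt (fun w : ℂ => (1 + w) / 2) (1 / 2) z := by
    simpa using ((hasDerivAt_id z).const_add 1).div_const 2
  rw [funext (chi_eq α)]
  refine ((hS.const_mul (1 / 2)).add (hlin.mul hlog)).congr_deriv ?_
  field_simp
  ring

lemma chi_conj {α : ℝ} (hα : 0 < α) {z : ℂ} (hre : -1 < z.re) (him : 0 < z.im) :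
    chi α (conj z) = conj (chi α z) := by
  have hS : chiRoot α (conj z) = conj (chiRoot α z) := by
    rw [chiRoot, chiRoot, ← conj_csqrt (slitPlane_arg_ne_pi (radicand_mem_slitPlane α hre him))]
    simp [map_ofNat]
  have hu := slitPlane_arg_ne_pi (mem_slitPlane_iff.2
    (Or.inl (two_mul_div_one_add_add_chiRoot_re_pos hα hre him)))
  rw [chi_eq, chi_eq, hS]
  simp [← log_conj _ hu, map_ofNat]

lemma strictAntiOn_re_chi_horizontal {α : ℝ} (hα : 0 < α) {y : ℝ} (hy : 0 < y) :
    StrictAntiOn (fun t : ℝ => (chi α (t + y * I)).re) (Ioi (-1)) := by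
  have hderiv : ∀ t ∈ Ioi (-1 : ℝ), HasDerivAt (fun t : ℝ => (chi α (t + y * I)).re)
      (log (2 * α / (1 + (t + y * I) + chiRoot α (t + y * I))) / 2).re t := fun t ht =>
    ((hasDerivAt_chi hα (by simpa using ht) (by simpa using hy)).comp_add_const _ _).real_of_complex
  refine strictAntiOn_of_deriv_neg (convex_Ioi _)
    (fun t ht => (hderiv t ht).continuousAt.continuousWithinAt) fun t ht => ?_
  rw [interior_Ioi] at ht
  rw [(hderiv t ht).deriv, div_ofNat_re]
  exact div_neg_of_neg_of_pos (re_log_two_mul_div_neg hα (by simpa using ht) (by simpa using hy))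
    two_pos

theorem re_chi_lt_re_chi_neg (α : ℝ) (hα : 0 < α) (z : ℂ) (hz : z ∈ Omega α) :
    (chi α z).re < (chi α (-z)).re := by
  obtain ⟨hx0, hx1, hy, -⟩ := hz
  calc (chi α z).re = (chi α (z.re + z.im * I)).re := by rw [re_add_im]
    _ < (chi α ((-z.re : ℝ) + z.im * I)).re :=
      strictAntiOn_re_chi_horizontal hα hy (mem_Ioi.2 (by linarith)) (mem_Ioi.2 (by linarith))
        (by linarith)
    _ = (chi α (-z)).re := by
      rw [← conj_re, ← chi_conj hα (by simpa using hx1) (by simpa using hy)]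
      congr 2
      apply Complex.ext <;> simp
end

section
/- Let α > 0. For every x ∈ (0,1), one has Re[ (1/2)·log( 2α / (1−x−2αi + √((1−x)·(1−x−4αi)) ) ) ] ≠ 0; equivalently, |1−x−2αi + √((1−x)·(1−x−4αi))| ≠ 2α. (This quantity is the real part of χ_α'(−x−2αi), since (1+(−x−2αi))² + 4α² = (1−x)(1−x−4αi).) -/
open Complex

/-!
Write `w = 1 - x - 2αi + √z` with `z = (1 - x)(1 - x - 4αi)`. Since `Im z < 0`, the principal
square root `√z` lies in the closed fourth quadrant, so `Re w > 0` and `Im w ≤ -2α`. Hence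
`‖w‖ > 2α`, and `Re log (2α / w) = log (2α / ‖w‖) < 0`.
-/

lemma csqrt_eq_exp {z : ℂ} (hz : z ≠ 0) : csqrt z = exp (log z / 2) := by
  rw [csqrt, cpow_def_of_ne_zero hz]
  ring_nf

lemma im_log_div_two (z : ℂ) : (log z / 2).im = z.arg / 2 := by
  simp [div_ofNat_im, log_im]

lemma csqrt_re_nonneg (z : ℂ) : 0 ≤ (csqrt z).re := by
  rcases eq_or_ne z 0 with rfl | hz
  · simp [csqrt]
  rw [csqrt_eq_exp hz, exp_re, im_log_div_two]
  refine mul_nonneg (Real.exp_nonneg _) (Real.cos_nonneg_of_mem_Icc ⟨?_, ?_⟩)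
  · linarith [neg_pi_lt_arg z]
  · linarith [arg_le_pi z]

lemma csqrt_im_nonpos_of_im_neg {z : ℂ} (hz : z.im < 0) : (csqrt z).im ≤ 0 := by
  have hz0 : z ≠ 0 := fun h ↦ by simp [h] at hz
  have harg : z.arg < 0 := arg_neg_iff.mpr hz
  rw [csqrt_eq_exp hz0, exp_im, im_log_div_two]
  refine mul_nonpos_of_nonneg_of_nonpos (Real.exp_nonneg _) ?_
  apply Real.sin_nonpos_of_nonpos_of_neg_pi_le <;> linarith [neg_pi_lt_arg z]

lemma lt_norm_add_of_re_nonneg_of_im_nonpos {c β : ℝ} {s : ℂ} (hc : 0 < c) (hβ : 0 ≤ β)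
    (hs_re : 0 ≤ s.re) (hs_im : s.im ≤ 0) : β < ‖c - β * I + s‖ := by
  have hre : (c - β * I + s).re = c + s.re := by simp
  have him : (c - β * I + s).im = -β + s.im := by simp
  have hsq : β ^ 2 < ‖c - β * I + s‖ ^ 2 := by
    rw [Complex.sq_norm, normSq_apply, hre, him]
    nlinarith
  exact lt_of_pow_lt_pow_left₀ 2 (norm_nonneg _) hsq

lemma re_log_neg_of_norm_lt_one {z : ℂ} (hz : z ≠ 0) (h : ‖z‖ < 1) : (log z).re < 0 := by
  rw [log_re]
  exact Real.log_neg (norm_pos_iff.mpr hz) h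

theorem re_chi_deriv_top_side_ne_zero (α : ℝ) (hα : 0 < α)
    (x : ℝ) (hx : x ∈ Set.Ioo (0 : ℝ) 1) :
    ((1 / 2 : ℂ) * Complex.log (2 * (α : ℂ) /
        (1 - (x : ℂ) - 2 * (α : ℂ) * Complex.I +
          csqrt ((1 - (x : ℂ)) * (1 - (x : ℂ) - 4 * (α : ℂ) * Complex.I))))).re ≠ 0 ∧
    ‖(1 - (x : ℂ) - 2 * (α : ℂ) * Complex.I +
        csqrt ((1 - (x : ℂ)) * (1 - (x : ℂ) - 4 * (α : ℂ) * Complex.I)))‖ ≠ 2 * α := by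
  set s := csqrt ((1 - (x : ℂ)) * (1 - (x : ℂ) - 4 * (α : ℂ) * Complex.I))
  have hc : 0 < 1 - x := sub_pos.mpr hx.2
  have hz_im : ((1 - (x : ℂ)) * (1 - (x : ℂ) - 4 * (α : ℂ) * I)).im < 0 := by
    simp only [mul_im, sub_re, sub_im, one_re, one_im, ofReal_re, ofReal_im, mul_re, I_re, I_im,
      re_ofNat, im_ofNat]
    nlinarith
  have hw : 2 * α < ‖(1 - (x : ℂ)) - 2 * (α : ℂ) * I + s‖ := by
    exact_mod_cast lt_norm_add_of_re_nonneg_of_im_nonpos (s := s) hc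
      (by positivity : (0 : ℝ) ≤ 2 * α) (csqrt_re_nonneg _) (csqrt_im_nonpos_of_im_neg hz_im)
  have hw0 : (1 - (x : ℂ)) - 2 * (α : ℂ) * I + s ≠ 0 := norm_pos_iff.mp (by linarith)
  have hquot : ‖2 * (α : ℂ) / ((1 - (x : ℂ)) - 2 * (α : ℂ) * I + s)‖ < 1 := by
    rw [norm_div, div_lt_one (by linarith)]
    simpa [abs_of_pos hα] using hw
  have hlog := re_log_neg_of_norm_lt_one (div_ne_zero (by simp [hα.ne']) hw0) hquot
  refine ⟨?_, hw.ne'⟩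
  simp only [mul_re, div_ofNat_re, div_ofNat_im, one_re, one_im]
  intro h
  linarith
end
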